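/- Fix an integer r with 1 ≤ r < p, let λ_1 ≥ … ≥ λ_p > 0 be the decreasingly sorted eigenvalues of XᵀX, and set L = λ_1, μ = λ_p, κ = L/μ, κ_+ = L/λ_r, κ_- = λ_{r+1}/μ. Suppose the period T is an integer with T ≥ κ_+·log(2κ/(2κ_- − 1)) + 1 and the cyclical learning-rate schedule uses η_+ = 1/L and η_- = 1/(κ_-·μ). Then for any 0 < ε < 1 and any iteration index t with t ≡ 0 (mod T) and t ≥ 2·T·κ_-·log(1/ε), the gradient-descent iterates satisfy ‖θ_t − θ_⋆‖ ≤ ε·‖θ_0 − θ_⋆‖. -/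
import Mathlib


open scoped RealInnerProductSpace Matrix

set_option maxHeartbeats 1000000 in
/-- **Super-convergence of Unstable CLR for linear regression** (Theorem 1, ε-accuracy form).
Under the setup of the cyclical learning-rate schedule with `η₊ = 1/L`, `η₋ = 1/(κ₋·μ)` and
period `T ≥ κ₊·log(2κ/(2κ₋ − 1)) + 1`, for any `0 < ε < 1`, once `t ≡ 0 (mod T)` and
`t ≥ 2·T·κ₋·log(1/ε)`, the gradient-descent iterates satisfy `‖θ_t − θ⋆‖ ≤ ε·‖θ_0 − θ⋆‖`. -/
theorem unstable_clr_linear_regression_eps_accuracy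
    {n p r : ℕ} (hr1 : 1 ≤ r) (hrp : r < p)
    (X : Matrix (Fin n) (Fin p) ℝ) (hpd : (Xᵀ * X).PosDef)
    (y : EuclideanSpace ℝ (Fin n))
    (b : OrthonormalBasis (Fin p) ℝ (EuclideanSpace ℝ (Fin p)))
    (lam : Fin p → ℝ) (hpos : ∀ i, 0 < lam i) (hsort : Antitone lam)
    (heig : ∀ i, Matrix.toEuclideanLin (Xᵀ * X) (b i) = lam i • b i)
    (L μ κ κp κm ηp ηm : ℝ)
    (hL : L = lam ⟨0, by omega⟩) (hμ : μ = lam ⟨p - 1, by omega⟩)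
    (hκ : κ = L / μ) (hκp : κp = L / lam ⟨r - 1, by omega⟩) (hκm : κm = lam ⟨r, hrp⟩ / μ)
    (hηp : ηp = 1 / L) (hηm : ηm = 1 / (κm * μ))
    (T : ℕ) (hT1 : 1 < T) (hT : (T : ℝ) ≥ κp * Real.log (2 * κ / (2 * κm - 1)) + 1)
    (η : ℕ → ℝ) (hη : ∀ t, η t = if t % T = T - 1 then ηm else ηp)
    (θstar : EuclideanSpace ℝ (Fin p))
    (hmin : ∀ θ' : EuclideanSpace ℝ (Fin p),
      (1 / 2) * ‖y - Matrix.toEuclideanLin X θstar‖ ^ 2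
        ≤ (1 / 2) * ‖y - Matrix.toEuclideanLin X θ'‖ ^ 2)
    (θ : ℕ → EuclideanSpace ℝ (Fin p))
    (hθ : ∀ t, θ (t + 1) = θ t + η t • Matrix.toEuclideanLin Xᵀ
      (y - Matrix.toEuclideanLin X (θ t)))
    (ε : ℝ) (hε0 : 0 < ε) (hε1 : ε < 1)
    (t : ℕ) (ht : t % T = 0) (htlarge : (t : ℝ) ≥ 2 * T * κm * Real.log (1 / ε)) :
    ‖θ t - θstar‖ ≤ ε * ‖θ 0 - θstar‖ := by
  have hT0 : 0 < T := by omega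
  -- adjoint property
  have hadj : ∀ (u : EuclideanSpace ℝ (Fin p)) (w : EuclideanSpace ℝ (Fin n)),
      ⟪Matrix.toEuclideanLin Xᵀ w, u⟫ = ⟪w, Matrix.toEuclideanLin X u⟫ := by
    intro u w
    rw [← Matrix.conjTranspose_eq_transpose_of_trivial,
      Matrix.toEuclideanLin_conjTranspose_eq_adjoint, LinearMap.adjoint_inner_left]
  have hcomp : ∀ u : EuclideanSpace ℝ (Fin p),
      Matrix.toEuclideanLin Xᵀ (Matrix.toEuclideanLin X u)
        = Matrix.toEuclideanLin (Xᵀ * X) u := by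
    intro u; simp [Matrix.toEuclideanLin_apply, Matrix.mulVec_mulVec]
  -- gradient vanishes at the minimizer
  set w : EuclideanSpace ℝ (Fin n) := y - Matrix.toEuclideanLin X θstar with hw
  have hgrad : Matrix.toEuclideanLin Xᵀ w = 0 := by
    by_contra hg0
    set g : EuclideanSpace ℝ (Fin p) := Matrix.toEuclideanLin Xᵀ w with hg
    have hgn : 0 < ‖g‖ := norm_pos_iff.mpr hg0
    have hgg : 0 < ⟪g, g⟫ := by rw [real_inner_self_eq_norm_sq]; positivity
    set v : EuclideanSpace ℝ (Fin n) := Matrix.toEuclideanLin X g with hv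
    set s : ℝ := ⟪g, g⟫ / (‖v‖ ^ 2 + 1) with hs
    have hspos : 0 < s := by positivity
    have hmin' := hmin (θstar + s • g)
    have hexp : y - Matrix.toEuclideanLin X (θstar + s • g) = w - s • v := by
      simp only [hw, hv, map_add, map_smul]; module
    rw [hexp] at hmin'
    have hns : ‖w - s • v‖ ^ 2 = ‖w‖ ^ 2 - 2 * (s * ⟪w, v⟫) + s ^ 2 * ‖v‖ ^ 2 := by
      rw [norm_sub_sq_real, real_inner_smul_right, norm_smul, Real.norm_eq_abs,
        mul_pow, sq_abs]
    have hwv : ⟪w, v⟫ = ⟪g, g⟫ := by rw [hv, ← hadj g w]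
    rw [hns, hwv] at hmin'
    have hV : (0:ℝ) ≤ ‖v‖ ^ 2 := by positivity
    have hsv : s * (‖v‖ ^ 2 + 1) = ⟪g, g⟫ := by rw [hs]; field_simp
    nlinarith [hmin', hgg, hspos, hV, hsv, mul_pos hspos hgg]
  -- eigen-structure facts
  have hAsym : ∀ u v : EuclideanSpace ℝ (Fin p),
      ⟪Matrix.toEuclideanLin (Xᵀ * X) u, v⟫ = ⟪u, Matrix.toEuclideanLin (Xᵀ * X) v⟫ := by
    intro u v
    have h1 := hadj v (Matrix.toEuclideanLin X u)
    have h2 := hadj u (Matrix.toEuclideanLin X v)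
    rw [← hcomp u, ← hcomp v, h1, real_inner_comm, ← h2]
    exact real_inner_comm _ _
  have hbi : ∀ (i : Fin p) (u : EuclideanSpace ℝ (Fin p)),
      ⟪b i, Matrix.toEuclideanLin (Xᵀ * X) u⟫ = lam i * ⟪b i, u⟫ := by
    intro i u
    rw [← hAsym, heig i, real_inner_smul_left]
  -- coordinate recursion
  set c : Fin p → ℕ → ℝ := fun i t => ⟪b i, θ t - θstar⟫ with hc
  have hrec : ∀ t, θ (t + 1) - θstar
      = (θ t - θstar) - η t • Matrix.toEuclideanLin (Xᵀ * X) (θ t - θstar) := by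
    intro t
    have h1 : y - Matrix.toEuclideanLin X (θ t)
        = w - Matrix.toEuclideanLin X (θ t - θstar) := by
      simp only [hw, map_sub]; abel
    rw [hθ t, h1, map_sub, hgrad, hcomp, zero_sub, smul_neg]
    abel
  have hcrec : ∀ i t, c i (t + 1) = (1 - η t * lam i) * c i t := by
    intro i t
    have h := hrec t
    simp only [hc]
    rw [h, inner_sub_right, real_inner_smul_right, hbi]
    ring
  have hcf : ∀ (i : Fin p) (t : ℕ),
      c i t = (∏ s ∈ Finset.range t, (1 - η s * lam i)) * c i 0 := by
    intro i t
    induction t with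
    | zero => simp
    | succ k ih => rw [hcrec i k, ih, Finset.prod_range_succ]; ring
  -- period product
  set ρ : Fin p → ℝ := fun i => ∏ j ∈ Finset.range T, (1 - η j * lam i) with hρ
  have hper : ∀ (i : Fin p) (m : ℕ),
      (∏ s ∈ Finset.range (m * T), (1 - η s * lam i)) = ρ i ^ m := by
    intro i m
    induction m with
    | zero => simp
    | succ k ih =>
      have h : (k + 1) * T = k * T + T := by ring
      rw [h, Finset.prod_range_add, ih, pow_succ]
      congr 1
      refine Finset.prod_congr rfl fun j hj => ?_
      have hmod : (k * T + j) % T = j % T := by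
        rw [Nat.add_comm, Nat.add_mul_mod_self_right]
      rw [hη, hη, hmod]
  -- positivity/ordering facts
  have hμpos : 0 < μ := hμ ▸ hpos _
  have hLpos : 0 < L := hL ▸ hpos _
  have hlamL : ∀ i, lam i ≤ L := by
    intro i; rw [hL]; exact hsort (by simp [Fin.le_def])
  have hμlam : ∀ i, μ ≤ lam i := by
    intro i; rw [hμ]
    refine hsort ?_
    simp only [Fin.le_def]
    omega
  have hκm1 : 1 ≤ κm := by
    rw [hκm, le_div_iff₀ hμpos, one_mul]; exact hμlam _
  have hκmpos : 0 < κm := by linarith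
  have hκpos : 0 < κ := by rw [hκ]; positivity
  have hlamRpos : 0 < lam ⟨r, hrp⟩ := hpos _
  have hlamR'pos : 0 < lam ⟨r - 1, by omega⟩ := hpos _
  have hκp1 : 1 ≤ κp := by
    rw [hκp, le_div_iff₀ hlamR'pos, one_mul]; exact hlamL _
  have hκppos : 0 < κp := by linarith
  have hηm' : ηm = 1 / lam ⟨r, hrp⟩ := by
    rw [hηm, hκm]; field_simp
  have hinvκm : 1 / κm = μ / lam ⟨r, hrp⟩ := by rw [hκm, one_div_div]
  -- value of ρ
  have hρval : ∀ i, ρ i = (1 - ηm * lam i) * (1 - ηp * lam i) ^ (T - 1) := by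
    intro i
    obtain ⟨T', hT'⟩ : ∃ T', T = T' + 1 := ⟨T - 1, by omega⟩
    have hT'' : T - 1 = T' := by omega
    show (∏ j ∈ Finset.range T, (1 - η j * lam i)) = _
    rw [hT'', hT', Finset.prod_range_succ]
    have h1 : η T' = ηm := by
      rw [hη, Nat.mod_eq_of_lt (by omega), if_pos (by omega)]
    have h2 : ∀ j ∈ Finset.range T', (1 - η j * lam i) = (1 - ηp * lam i) := by
      intro j hj
      rw [Finset.mem_range] at hj
      rw [hη, Nat.mod_eq_of_lt (by omega), if_neg (by omega)]
    rw [Finset.prod_congr rfl h2, Finset.prod_const, Finset.card_range, h1]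
    ring
  -- the contraction factor bound
  set q : ℝ := 1 - 1 / (2 * κm) with hq
  have h2κm : 1 / (2 * κm) ≤ 1 / 2 :=
    one_div_le_one_div_of_le (by norm_num) (by linarith)
  have hq0 : (0:ℝ) ≤ q := by rw [hq]; linarith
  have hρq : ∀ i, |ρ i| ≤ q := by
    intro i
    rw [hρval i, abs_mul, abs_pow]
    have hlip := hpos i
    have hbp0 : 0 ≤ 1 - ηp * lam i := by
      rw [hηp, sub_nonneg, div_mul_eq_mul_div, one_mul, div_le_one hLpos]
      exact hlamL i
    have hbp1 : 1 - ηp * lam i ≤ 1 := by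
      rw [hηp]
      have : 0 < lam i / L := by positivity
      rw [div_mul_eq_mul_div, one_mul]
      linarith
    have habsp : |1 - ηp * lam i| = 1 - ηp * lam i := abs_of_nonneg hbp0
    have hppow : |1 - ηp * lam i| ^ (T - 1) ≤ 1 := by
      apply pow_le_one₀ (abs_nonneg _)
      rw [habsp]; exact hbp1
    by_cases hcase : r ≤ i.val
    · -- small eigenvalues: the long step contracts
      have hlamle : lam i ≤ lam ⟨r, hrp⟩ := by
        refine hsort ?_
        simp only [Fin.le_def]
        omega
      have hx1 : ηm * lam i ≤ 1 := by
        rw [hηm', div_mul_eq_mul_div, one_mul, div_le_one hlamRpos]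
        exact hlamle
      have hx2 : 1 / κm ≤ ηm * lam i := by
        rw [hηm', hinvκm, div_mul_eq_mul_div, one_mul]
        exact (div_le_div_iff_of_pos_right hlamRpos).mpr (hμlam i)
      have h1 : |1 - ηm * lam i| ≤ 1 - 1 / κm := by
        rw [abs_of_nonneg (by linarith)]
        linarith
      calc |1 - ηm * lam i| * |1 - ηp * lam i| ^ (T - 1)
          ≤ (1 - 1 / κm) * 1 := by
            apply mul_le_mul h1 hppow (pow_nonneg (abs_nonneg _) _)
            have : 1 / κm ≤ 1 := by rw [div_le_one hκmpos]; exact hκm1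
            linarith
        _ ≤ q := by
            rw [hq, mul_one]
            have : 1 / (2 * κm) ≤ 1 / κm :=
              one_div_le_one_div_of_le hκmpos (by linarith)
            linarith
    · -- large eigenvalues: the fast steps contract, the long step expands boundedly
      push_neg at hcase
      have hlamge : lam ⟨r - 1, by omega⟩ ≤ lam i := by
        refine hsort ?_
        simp only [Fin.le_def]
        omega
      have hinvκp : 1 / κp = lam ⟨r - 1, by omega⟩ / L := by rw [hκp, one_div_div]
      have hstep1 : 1 - ηp * lam i ≤ 1 - 1 / κp := by
        rw [hηp, hinvκp, div_mul_eq_mul_div, one_mul]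
        have h := (div_le_div_iff_of_pos_right hLpos).mpr hlamge
        linarith
      have hstep2 : 1 - 1 / κp ≤ Real.exp (-(1 / κp)) := by
        have := Real.add_one_le_exp (-(1 / κp))
        linarith
      have hτ : ((T - 1 : ℕ) : ℝ) = (T : ℝ) - 1 := by
        rw [Nat.cast_sub (by omega)]; norm_num
      have hpow2 : |1 - ηp * lam i| ^ (T - 1) ≤ Real.exp (-(((T : ℝ) - 1) / κp)) := by
        calc |1 - ηp * lam i| ^ (T - 1)
            ≤ Real.exp (-(1 / κp)) ^ (T - 1) := by
              apply pow_le_pow_left₀ (abs_nonneg _)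
              rw [habsp]; linarith
          _ = Real.exp (-(((T : ℝ) - 1) / κp)) := by
              rw [← Real.exp_nat_mul, hτ]
              congr 1
              ring
      have h2κm1 : (0:ℝ) < 2 * κm - 1 := by linarith
      have hfrac : (0:ℝ) < (2 * κm - 1) / (2 * κ) := by positivity
      have hstep3 : Real.exp (-(((T : ℝ) - 1) / κp)) ≤ (2 * κm - 1) / (2 * κ) := by
        rw [← Real.le_log_iff_exp_le hfrac]
        have hlogeq : Real.log ((2 * κm - 1) / (2 * κ))
            = - Real.log (2 * κ / (2 * κm - 1)) := by
          rw [show (2 * κm - 1) / (2 * κ) = (2 * κ / (2 * κm - 1))⁻¹ by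
            rw [inv_div], Real.log_inv]
        rw [hlogeq, neg_le_neg_iff]
        rw [le_div_iff₀ hκppos]
        calc Real.log (2 * κ / (2 * κm - 1)) * κp
            = κp * Real.log (2 * κ / (2 * κm - 1)) := by ring
          _ ≤ (T : ℝ) - 1 := by linarith
      -- bound on the long-step factor
      have hLR : lam ⟨r, hrp⟩ ≤ L := hlamL _
      have hκκm : κ / κm = L / lam ⟨r, hrp⟩ := by
        rw [hκ, hκm]
        field_simp
      have hκκm1 : 1 ≤ κ / κm := by
        rw [hκκm, le_div_iff₀ hlamRpos, one_mul]; exact hLR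
      have hfac : |1 - ηm * lam i| ≤ κ / κm := by
        rw [hηm', div_mul_eq_mul_div, one_mul, abs_le]
        have hx0 : 0 < lam i / lam ⟨r, hrp⟩ := by positivity
        have hx1 : lam i / lam ⟨r, hrp⟩ ≤ L / lam ⟨r, hrp⟩ :=
          (div_le_div_iff_of_pos_right hlamRpos).mpr (hlamL i)
        constructor
        · rw [hκκm]; linarith
        · linarith
      calc |1 - ηm * lam i| * |1 - ηp * lam i| ^ (T - 1)
          ≤ (κ / κm) * ((2 * κm - 1) / (2 * κ)) := by
            apply mul_le_mul hfac (hpow2.trans hstep3) (pow_nonneg (abs_nonneg _) _)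
            linarith
        _ = q := by
            rw [hq]
            field_simp
  -- assemble: per-coordinate decay
  obtain ⟨m, hm⟩ : ∃ m, t = m * T := by
    obtain ⟨m, hm⟩ := Nat.dvd_of_mod_eq_zero ht
    exact ⟨m, by rw [hm, Nat.mul_comm]⟩
  have hqexp : q ≤ Real.exp (-(1 / (2 * κm))) := by
    have := Real.add_one_le_exp (-(1 / (2 * κm)))
    rw [hq]; linarith
  have hexpm : Real.exp (-(1 / (2 * κm))) ^ m ≤ ε := by
    rw [← Real.exp_nat_mul]
    have hlog : Real.log (1 / ε) = - Real.log ε := by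
      rw [one_div, Real.log_inv]
    rw [hlog] at htlarge
    have hmT : ((m : ℝ) * T : ℝ) ≥ 2 * T * κm * (- Real.log ε) := by
      rw [← Nat.cast_mul, ← hm] at *
      push_cast
      push_cast at htlarge
      linarith
    have hTpos : (0:ℝ) < T := by positivity
    have hm2 : (m : ℝ) ≥ 2 * κm * (- Real.log ε) := by
      nlinarith
    have harg : (m : ℝ) * -(1 / (2 * κm)) ≤ Real.log ε := by
      rw [mul_neg, neg_le]
      rw [ge_iff_le, ← sub_nonneg] at hm2
      have h2κ : (0:ℝ) < 2 * κm := by linarith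
      rw [mul_one_div, le_div_iff₀ h2κ]
      nlinarith
    calc Real.exp ((m : ℝ) * -(1 / (2 * κm))) ≤ Real.exp (Real.log ε) :=
          Real.exp_le_exp.mpr harg
      _ = ε := Real.exp_log hε0
  have hcbound : ∀ i : Fin p, |c i t| ≤ ε * |c i 0| := by
    intro i
    rw [hcf i t, hm, hper i m, abs_mul, abs_pow]
    have h1 : |ρ i| ^ m ≤ ε := by
      calc |ρ i| ^ m ≤ q ^ m := pow_le_pow_left₀ (abs_nonneg _) (hρq i) m
        _ ≤ Real.exp (-(1 / (2 * κm))) ^ m :=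
            pow_le_pow_left₀ hq0 hqexp m
        _ ≤ ε := hexpm
    exact mul_le_mul_of_nonneg_right h1 (abs_nonneg _)
  -- Parseval and conclusion
  have hsq : ∀ x : EuclideanSpace ℝ (Fin p), ‖x‖ ^ 2 = ∑ i, ⟪b i, x⟫ ^ 2 := by
    intro x
    rw [← real_inner_self_eq_norm_sq, ← b.sum_inner_mul_inner x x]
    congr 1; ext i; rw [real_inner_comm]; ring
  have hfin : ‖θ t - θstar‖ ^ 2 ≤ (ε * ‖θ 0 - θstar‖) ^ 2 := by
    rw [hsq, mul_pow, hsq, Finset.mul_sum]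
    apply Finset.sum_le_sum
    intro i _
    have h := hcbound i
    have h2 : |c i t| ^ 2 ≤ (ε * |c i 0|) ^ 2 := by
      apply pow_le_pow_left₀ (abs_nonneg _) h
    simp only [hc] at h2 ⊢
    rw [sq_abs, mul_pow, sq_abs] at h2
    exact h2
  have h1 := Real.sqrt_le_sqrt hfin
  rwa [Real.sqrt_sq (norm_nonneg _), Real.sqrt_sq (by positivity)] at h1
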